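/- For c ∈ (0,1), with u₃(x) = √(1−c²)·sech(√(1−c²)·x) and θ(x) = arctan(sinh(√(1−c²)·x)/c), the momentum p = ∫_ℝ u₃(x)·θ'(x) dx equals 2·arctan(√(1−c²)/c). -/

import Mathlib

/-!
With `a = √(1 - c²)`, the integrand `u₃ θ'` simplifies to `a² c / (c² + sinh² (a x))`, and the
substitution `y = (a / c) tanh (a x)` shows that `arctan ((a / c) tanh (a x))` is an
antiderivative. It tends to `± arctan (a / c)` at `± ∞`, and since the integrand is nonnegative
these limits also give its integrability over `ℝ`.
-/

open MeasureTheory Filter Set Topology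

namespace Real

theorem tanh_eq_one_sub_exp_neg_sq_div (x : ℝ) :
    tanh x = (1 - exp (-x) ^ 2) / (1 + exp (-x) ^ 2) := by
  have hx : exp x * exp (-x) = 1 := by rw [← exp_add, add_neg_cancel, exp_zero]
  rw [tanh_eq, div_eq_div_iff (by positivity) (by positivity)]
  linear_combination 2 * exp (-x) * hx

theorem tendsto_tanh_atTop : Tendsto tanh atTop (𝓝 1) := by
  have h := tendsto_exp_neg_atTop_nhds_zero.pow 2
  have hlim := (tendsto_const_nhds (x := (1 : ℝ)).sub h).div (tendsto_const_nhds.add h)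
    (by norm_num : (1 : ℝ) + 0 ^ 2 ≠ 0)
  rw [zero_pow two_ne_zero, sub_zero, add_zero, div_one] at hlim
  exact hlim.congr fun x => (tanh_eq_one_sub_exp_neg_sq_div x).symm

theorem tendsto_tanh_atBot : Tendsto tanh atBot (𝓝 (-1)) := by
  simpa only [Function.comp_def, tanh_neg, neg_neg] using
    (tendsto_tanh_atTop.comp tendsto_neg_atBot_atTop).neg

theorem hasDerivAt_tanh (x : ℝ) : HasDerivAt tanh (1 / cosh x ^ 2) x := by
  have h := (hasDerivAt_sinh x).div (hasDerivAt_cosh x) (cosh_pos x).ne'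
  rw [show sinh / cosh = tanh from funext fun y => (tanh_eq_sinh_div_cosh y).symm] at h
  refine h.congr_deriv ?_
  rw [← cosh_sq_sub_sinh_sq x]
  ring

end Real

section NonnegDeriv

variable {F f : ℝ → ℝ} {a m n : ℝ}

theorem integrableOn_Iic_deriv_of_nonneg (hderiv : ∀ x ∈ Iic a, HasDerivAt F (f x) x)
    (hf : ∀ x ∈ Iio a, 0 ≤ f x) (hbot : Tendsto F atBot (𝓝 m)) : IntegrableOn f (Iic a) := by
  have hderiv' : ∀ x ∈ Ici (-a), HasDerivAt (fun y => -F (-y)) (f (-x)) x := by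
    intro x hx
    have hFx := hderiv (-x) (neg_le.mp (mem_Ici.mp hx))
    simpa [Function.comp_def] using (hFx.comp x (hasDerivAt_neg x)).fun_neg
  have hint : IntegrableOn (fun x => f (-x)) (Ioi (-a)) :=
    integrableOn_Ioi_deriv_of_nonneg' hderiv' (fun x hx => hf (-x) (neg_lt.mp (mem_Ioi.mp hx)))
      (hbot.comp tendsto_neg_atTop_atBot).neg
  have hrefl := (Measure.measurePreserving_neg (volume : Measure ℝ)).integrableOn_comp_preimage
    (Homeomorph.neg ℝ).measurableEmbedding (f := f) (s := Iio a)
  rw [integrableOn_Iic_iff_integrableOn_Iio, ← hrefl]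
  simpa [Function.comp_def] using hint

theorem integrable_of_hasDerivAt_of_nonneg (hderiv : ∀ x, HasDerivAt F (f x) x)
    (hf : ∀ x, 0 ≤ f x) (hbot : Tendsto F atBot (𝓝 m)) (htop : Tendsto F atTop (𝓝 n)) :
    Integrable f := by
  rw [← integrableOn_univ, ← Iic_union_Ioi (a := (0 : ℝ))]
  exact (integrableOn_Iic_deriv_of_nonneg (fun x _ => hderiv x) (fun x _ => hf x) hbot).union
    (integrableOn_Ioi_deriv_of_nonneg' (fun x _ => hderiv x) (fun x _ => hf x) htop)

theorem integral_of_hasDerivAt_of_nonneg (hderiv : ∀ x, HasDerivAt F (f x) x)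
    (hf : ∀ x, 0 ≤ f x) (hbot : Tendsto F atBot (𝓝 m)) (htop : Tendsto F atTop (𝓝 n)) :
    ∫ x, f x = n - m :=
  integral_of_hasDerivAt_of_tendsto hderiv (integrable_of_hasDerivAt_of_nonneg hderiv hf hbot htop)
    hbot htop

end NonnegDeriv

open Real

theorem hasDerivAt_arctan_sinh_mul_div (a c x : ℝ) (hc : c ≠ 0) :
    HasDerivAt (fun y => arctan (sinh (a * y) / c))
      (a * c * cosh (a * x) / (c ^ 2 + sinh (a * x) ^ 2)) x := by
  have h := (((hasDerivAt_sinh (a * x)).comp x ((hasDerivAt_id x).const_mul a)).div_const c).arctan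
  refine h.congr_deriv ?_
  rw [Function.comp_apply]
  field_simp

theorem hasDerivAt_arctan_mul_tanh_mul (k a x : ℝ) :
    HasDerivAt (fun y => arctan (k * tanh (a * y)))
      (k * a / (cosh (a * x) ^ 2 + k ^ 2 * sinh (a * x) ^ 2)) x := by
  have h := (((hasDerivAt_tanh (a * x)).comp x ((hasDerivAt_id x).const_mul a)).const_mul k).arctan
  refine h.congr_deriv ?_
  have hcosh := (cosh_pos (a * x)).ne'
  rw [Function.comp_apply, tanh_eq_sinh_div_cosh]
  field_simp

theorem tendsto_arctan_mul_tanh_mul_atTop (k : ℝ) {a : ℝ} (ha : 0 < a) :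
    Tendsto (fun y => arctan (k * tanh (a * y))) atTop (𝓝 (arctan k)) := by
  have h := (tendsto_tanh_atTop.comp (tendsto_id.const_mul_atTop ha)).const_mul k
  rw [mul_one] at h
  exact (continuous_arctan.tendsto k).comp h

theorem tendsto_arctan_mul_tanh_mul_atBot (k : ℝ) {a : ℝ} (ha : 0 < a) :
    Tendsto (fun y => arctan (k * tanh (a * y))) atBot (𝓝 (-arctan k)) := by
  have h := (tendsto_tanh_atBot.comp (tendsto_id.const_mul_atBot ha)).const_mul k
  rw [mul_neg_one] at h
  rw [← arctan_neg]
  exact (continuous_arctan.tendsto (-k)).comp h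

/-- For c ∈ (0,1), the momentum p = ∫_ℝ u₃ θ' equals 2 arctan(√(1−c²)/c). -/
theorem stmt9 (c : ℝ) (hc : c ∈ Set.Ioo (0:ℝ) 1)
    (u₃ θ : ℝ → ℝ)
    (hu₃ : ∀ x, u₃ x = Real.sqrt (1 - c^2) * (1 / Real.cosh (Real.sqrt (1 - c^2) * x)))
    (hθ : ∀ x, θ x = Real.arctan (Real.sinh (Real.sqrt (1 - c^2) * x) / c)) :
    ∫ x : ℝ, u₃ x * deriv θ x = 2 * Real.arctan (Real.sqrt (1 - c^2) / c) := by
  obtain ⟨hc0, hc1⟩ := hc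
  set a := √(1 - c ^ 2)
  have ha : 0 < a := sqrt_pos.2 (by nlinarith)
  have hac : a ^ 2 + c ^ 2 = 1 := by rw [sq_sqrt (by nlinarith)]; ring
  have hintegrand : ∀ x, u₃ x * deriv θ x = a ^ 2 * c / (c ^ 2 + sinh (a * x) ^ 2) := by
    intro x
    rw [hu₃, funext hθ, (hasDerivAt_arctan_sinh_mul_div a c x hc0.ne').deriv]
    have hcosh := (cosh_pos (a * x)).ne'
    field_simp
  have hF : ∀ x, HasDerivAt (fun y => arctan (a / c * tanh (a * y)))
      (a ^ 2 * c / (c ^ 2 + sinh (a * x) ^ 2)) x := by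
    intro x
    refine (hasDerivAt_arctan_mul_tanh_mul (a / c) a x).congr_deriv ?_
    have hcosh_sq := cosh_sq (a * x)
    field_simp
    linear_combination -c ^ 2 * hcosh_sq - sinh (a * x) ^ 2 * hac
  rw [integral_congr_ae (ae_of_all _ hintegrand),
    integral_of_hasDerivAt_of_nonneg hF (fun x => by positivity)
      (tendsto_arctan_mul_tanh_mul_atBot _ ha) (tendsto_arctan_mul_tanh_mul_atTop _ ha)]
  ring
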